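/- Let J : ℝ^d × ℝ^{n×p} → ℝ, (θ, Z) ↦ J(θ; Z), be twice continuously differentiable, let θ* : ℝ^{n×p} → ℝ^d be a map differentiable at X with ∇_θ J(θ*(X'); X') = 0 for all X' in a neighborhood of X, and suppose the Hessian H = ∇²_{θθ} J(θ*(X); X) is invertible. Define the target-utility map φ : ℝ^{n×p} → ℝ by φ(X') = J(θ*(X'); X), i.e., the loss of the parameter trained on X' evaluated on the fixed original data X. Then the derivative of φ at the point X' = X equals −L H⁻¹ G, where L = ∇_θ J(θ*(X); X) is the gradient of the loss with respect to the parameter at θ*(X), and G = ∇²_{θX} J(θ*(X); X). -/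

import Mathlib

open scoped Topology

/-!
Differentiating the stationarity condition `∇_θ J(θ*(X'); X') = 0` at `X` gives
`H ∘ Dθ*(X) + G = 0` (implicit differentiation), so `Dθ*(X) = -H⁻¹ G`; the chain rule for
`X' ↦ J(θ*(X'); X)` then yields `Dφ(X) = ⟪L, ·⟫ ∘ Dθ*(X) = -L H⁻¹ G`.
-/

open ContinuousLinearMap

section ImplicitDifferentiation

variable {𝕜 E F V : Type*} [NontriviallyNormedField 𝕜]
  [NormedAddCommGroup E] [NormedSpace 𝕜 E] [NormedAddCommGroup F] [NormedSpace 𝕜 F]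
  [NormedAddCommGroup V] [NormedSpace 𝕜 V]

theorem fderiv_comp_prodMk_left {g : E × F → V} {x : E} {y : F}
    (hg : DifferentiableAt 𝕜 g (x, y)) :
    fderiv 𝕜 (fun x' => g (x', y)) x = (fderiv 𝕜 g (x, y)).comp (inl 𝕜 E F) :=
  (hg.hasFDerivAt.comp x (hasFDerivAt_prodMk_left x y)).fderiv

theorem fderiv_comp_prodMk_right {g : E × F → V} {x : E} {y : F}
    (hg : DifferentiableAt 𝕜 g (x, y)) :
    fderiv 𝕜 (fun y' => g (x, y')) y = (fderiv 𝕜 g (x, y)).comp (inr 𝕜 E F) :=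
  (hg.hasFDerivAt.comp y (hasFDerivAt_prodMk_right x y)).fderiv

theorem fderiv_eq_neg_comp_of_eventually_eq_zero {g : E × F → V} {θ : F → E} {y : F}
    (hg : DifferentiableAt 𝕜 g (θ y, y)) (hθ : DifferentiableAt 𝕜 θ y)
    (hzero : ∀ᶠ y' in 𝓝 y, g (θ y', y') = 0) {Hinv : V →L[𝕜] E}
    (hHinv : Hinv.comp ((fderiv 𝕜 g (θ y, y)).comp (inl 𝕜 E F)) = ContinuousLinearMap.id 𝕜 E) :
    fderiv 𝕜 θ y = -(Hinv.comp ((fderiv 𝕜 g (θ y, y)).comp (inr 𝕜 E F))) := by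
  set D := fderiv 𝕜 g (θ y, y)
  have hchain : HasFDerivAt (fun y' => g (θ y', y'))
      (D.comp ((fderiv 𝕜 θ y).prod (ContinuousLinearMap.id 𝕜 F))) y :=
    hg.hasFDerivAt.comp (f := fun y' => (θ y', y')) y (hθ.hasFDerivAt.prodMk (hasFDerivAt_id y))
  have hconst : HasFDerivAt (fun y' => g (θ y', y')) (0 : F →L[𝕜] V) y :=
    (hasFDerivAt_const 0 y).congr_of_eventuallyEq hzero
  have hlin : ∀ v, D (inl 𝕜 E F (fderiv 𝕜 θ y v)) + D (inr 𝕜 E F v) = 0 := fun v => by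
    simpa [← map_add] using congr($(hchain.unique hconst) v)
  ext1 v
  calc fderiv 𝕜 θ y v = Hinv (D (inl 𝕜 E F (fderiv 𝕜 θ y v))) := congr($hHinv _).symm
    _ = -Hinv (D (inr 𝕜 E F v)) := by rw [eq_neg_of_add_eq_zero_left (hlin v), map_neg]

end ImplicitDifferentiation

section PartialGradient

variable {E F : Type*} [NormedAddCommGroup E] [InnerProductSpace ℝ E] [CompleteSpace E]
  [NormedAddCommGroup F] [NormedSpace ℝ F]

theorem gradient_comp_prodMk_left {f : E × F → ℝ} {x : E} {y : F}
    (hf : DifferentiableAt ℝ f (x, y)) :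
    gradient (fun x' => f (x', y)) x =
      (InnerProductSpace.toDual ℝ E).symm ((fderiv ℝ f (x, y)).comp (inl ℝ E F)) := by
  rw [gradient, fderiv_comp_prodMk_left hf]

theorem ContDiff.differentiable_gradient_comp_prodMk_left {f : E × F → ℝ} (hf : ContDiff ℝ 2 f) :
    Differentiable ℝ (fun q : E × F => gradient (fun x => f (x, q.2)) q.1) := by
  have hf₁ : Differentiable ℝ f := hf.differentiable (by norm_num)
  have hDf : Differentiable ℝ (fderiv ℝ f) :=
    (hf.fderiv_right (m := 1) (by norm_num)).differentiable (by norm_num)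
  simp_rw [gradient_comp_prodMk_left (hf₁ _)]
  exact (InnerProductSpace.toDual ℝ E).symm.toContinuousLinearEquiv.differentiable.comp
    (hDf.clm_comp (differentiable_const _))

end PartialGradient

theorem statement3_general {d n p : ℕ}
    (J : EuclideanSpace ℝ (Fin d) → EuclideanSpace ℝ (Fin n × Fin p) → ℝ)
    (hJ : ContDiff ℝ 2 (fun q : EuclideanSpace ℝ (Fin d) × EuclideanSpace ℝ (Fin n × Fin p) =>
      J q.1 q.2))
    (θstar : EuclideanSpace ℝ (Fin n × Fin p) → EuclideanSpace ℝ (Fin d))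
    (X : EuclideanSpace ℝ (Fin n × Fin p))
    (hθ : DifferentiableAt ℝ θstar X)
    (hstat : ∀ᶠ X' in 𝓝 X, gradient (fun θ => J θ X') (θstar X') = 0)
    (H : EuclideanSpace ℝ (Fin d) →L[ℝ] EuclideanSpace ℝ (Fin d))
    (hH : H = fderiv ℝ (fun θ => gradient (fun θ' => J θ' X) θ) (θstar X))
    (G : EuclideanSpace ℝ (Fin n × Fin p) →L[ℝ] EuclideanSpace ℝ (Fin d))
    (hG : G = fderiv ℝ (fun X' => gradient (fun θ => J θ X') (θstar X)) X)
    (Hinv : EuclideanSpace ℝ (Fin d) →L[ℝ] EuclideanSpace ℝ (Fin d))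
    (hHinv₁ : Hinv.comp H = ContinuousLinearMap.id ℝ _)
    (L : EuclideanSpace ℝ (Fin d))
    (hL : L = gradient (fun θ => J θ X) (θstar X)) :
    fderiv ℝ (fun X' => J (θstar X') X) X =
      -(((InnerProductSpace.toDual ℝ (EuclideanSpace ℝ (Fin d)) L :
          EuclideanSpace ℝ (Fin d) →L[ℝ] ℝ)).comp (Hinv.comp G)) := by
  set grad := fun q : EuclideanSpace ℝ (Fin d) × EuclideanSpace ℝ (Fin n × Fin p) =>
    gradient (fun θ => J θ q.2) q.1
  have hgrad : Differentiable ℝ grad := hJ.differentiable_gradient_comp_prodMk_left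
  have hH' : H = (fderiv ℝ grad (θstar X, X)).comp (inl ℝ _ _) :=
    hH.trans (fderiv_comp_prodMk_left (hgrad _))
  have hG' : G = (fderiv ℝ grad (θstar X, X)).comp (inr ℝ _ _) :=
    hG.trans (fderiv_comp_prodMk_right (hgrad _))
  have hDθ : fderiv ℝ θstar X = -(Hinv.comp G) := by
    rw [hG']
    exact fderiv_eq_neg_comp_of_eventually_eq_zero (hgrad _) hθ hstat (hH' ▸ hHinv₁)
  have hJθ : HasFDerivAt (fun θ => J θ X)
      (InnerProductSpace.toDual ℝ _ L : EuclideanSpace ℝ (Fin d) →L[ℝ] ℝ) (θstar X) :=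
    hL ▸ ((hJ.differentiable (by norm_num) _).comp _
      (hasFDerivAt_prodMk_left (θstar X) X).differentiableAt).hasGradientAt.hasFDerivAt
  exact (hJθ.comp X hθ.hasFDerivAt).fderiv.trans (by rw [hDθ, comp_neg])

theorem statement3 {d n p : ℕ}
    (J : EuclideanSpace ℝ (Fin d) → EuclideanSpace ℝ (Fin n × Fin p) → ℝ)
    (hJ : ContDiff ℝ 2 (fun q : EuclideanSpace ℝ (Fin d) × EuclideanSpace ℝ (Fin n × Fin p) =>
      J q.1 q.2))
    (θstar : EuclideanSpace ℝ (Fin n × Fin p) → EuclideanSpace ℝ (Fin d))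
    (X : EuclideanSpace ℝ (Fin n × Fin p))
    (hθ : DifferentiableAt ℝ θstar X)
    (hstat : ∀ᶠ X' in 𝓝 X, gradient (fun θ => J θ X') (θstar X') = 0)
    (H : EuclideanSpace ℝ (Fin d) →L[ℝ] EuclideanSpace ℝ (Fin d))
    (hH : H = fderiv ℝ (fun θ => gradient (fun θ' => J θ' X) θ) (θstar X))
    (G : EuclideanSpace ℝ (Fin n × Fin p) →L[ℝ] EuclideanSpace ℝ (Fin d))
    (hG : G = fderiv ℝ (fun X' => gradient (fun θ => J θ X') (θstar X)) X)
    (Hinv : EuclideanSpace ℝ (Fin d) →L[ℝ] EuclideanSpace ℝ (Fin d))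
    (hHinv₁ : Hinv.comp H = ContinuousLinearMap.id ℝ _)
    (hHinv₂ : H.comp Hinv = ContinuousLinearMap.id ℝ _)
    (L : EuclideanSpace ℝ (Fin d))
    (hL : L = gradient (fun θ => J θ X) (θstar X)) :
    fderiv ℝ (fun X' => J (θstar X') X) X =
      -(((InnerProductSpace.toDual ℝ (EuclideanSpace ℝ (Fin d)) L :
          EuclideanSpace ℝ (Fin d) →L[ℝ] ℝ)).comp (Hinv.comp G)) :=
  statement3_general J hJ θstar X hθ hstat H hH G hG Hinv hHinv₁ L hL
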